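/- Let X, Y, Z, M₁₂, M₂₃, M₃₁ be finite-valued random variables satisfying: (i) H(X | M₁₂, M₃₁) = 0; (ii) H(Y | M₁₂, M₂₃) = 0; (iii) H(Z | M₂₃, M₃₁) = 0; and (iv) I(M₁₂, M₃₁ ; Y, Z | X) = 0 (privacy against Alice). Then H(M₂₃) ≥ H(Y, Z | X). -/

import Mathlib

/-! Let `A = (M₁₂, M₃₁)` be Alice's view. Privacy says that `(Y, Z)` and `A` are independent
given `X`, so `H(Y,Z | X) = H(Y,Z | A, X) ≤ H(Y,Z | A)`. Given `A`, the pair `(Y, Z)` is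
determined by `M₂₃` (`Y` by `M₁₂, M₂₃` and `Z` by `M₂₃, M₃₁`), hence
`H(Y,Z | A) ≤ H(M₂₃ | A) ≤ H(M₂₃)`. The only analytic input is the nonnegativity of
conditional mutual information (Gibbs' inequality). -/

open scoped BigOperators

noncomputable section

/-- Probability that the random variable `X` takes the value `a`,
with respect to the probability mass function `p` on the finite sample space `Ω`. -/
def prob {Ω : Type*} [Fintype Ω] {α : Type*} [DecidableEq α]
    (p : Ω → ℝ) (X : Ω → α) (a : α) : ℝ :=
  ∑ ω, if X ω = a then p ω else 0

/-- Shannon entropy (base 2) of the random variable `X`. -/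
def ent {Ω : Type*} [Fintype Ω] {α : Type*} [Fintype α] [DecidableEq α]
    (p : Ω → ℝ) (X : Ω → α) : ℝ :=
  -∑ a, prob p X a * Real.logb 2 (prob p X a)

/-- Conditional entropy `H(X|Y)`. -/
def condEnt {Ω : Type*} [Fintype Ω] {α β : Type*} [Fintype α] [DecidableEq α]
    [Fintype β] [DecidableEq β] (p : Ω → ℝ) (X : Ω → α) (Y : Ω → β) : ℝ :=
  ent p (fun ω => (X ω, Y ω)) - ent p Y

/-- Mutual information `I(X;Y)`. -/
def mi {Ω : Type*} [Fintype Ω] {α β : Type*} [Fintype α] [DecidableEq α]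
    [Fintype β] [DecidableEq β] (p : Ω → ℝ) (X : Ω → α) (Y : Ω → β) : ℝ :=
  ent p X + ent p Y - ent p (fun ω => (X ω, Y ω))

/-- Conditional mutual information `I(X;Y|Z)`. -/
def cmi {Ω : Type*} [Fintype Ω] {α β γ : Type*} [Fintype α] [DecidableEq α]
    [Fintype β] [DecidableEq β] [Fintype γ] [DecidableEq γ]
    (p : Ω → ℝ) (X : Ω → α) (Y : Ω → β) (Z : Ω → γ) : ℝ :=
  ent p (fun ω => (X ω, Z ω)) + ent p (fun ω => (Y ω, Z ω))
    - ent p (fun ω => (X ω, Y ω, Z ω)) - ent p Z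

section Prob

variable {Ω : Type*} [Fintype Ω] {α β γ : Type*} [DecidableEq α] [DecidableEq β]
  [DecidableEq γ] {p : Ω → ℝ}

theorem prob_nonneg (hp : ∀ ω, 0 ≤ p ω) (X : Ω → α) (a : α) : 0 ≤ prob p X a :=
  Finset.sum_nonneg fun ω _ => by split_ifs <;> simp [hp ω]

theorem le_prob_self (hp : ∀ ω, 0 ≤ p ω) (X : Ω → α) (ω : Ω) : p ω ≤ prob p X (X ω) := by
  unfold prob
  calc p ω = if X ω = X ω then p ω else 0 := by simp
    _ ≤ _ := Finset.single_le_sum (f := fun ω' => if X ω' = X ω then p ω' else 0)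
        (fun ω' _ => by split_ifs <;> simp [hp ω']) (Finset.mem_univ ω)

theorem prob_le_prob_of_comp (hp : ∀ ω, 0 ≤ p ω) {W : Ω → α} {V : Ω → β} (f : α → β)
    (hV : ∀ ω, V ω = f (W ω)) (a : α) : prob p W a ≤ prob p V (f a) := by
  unfold prob
  refine Finset.sum_le_sum fun ω _ => ?_
  by_cases h : W ω = a
  · simp [h, hV]
  · split_ifs <;> simp [hp ω]

theorem sum_prob_pair_left [Fintype α] (p : Ω → ℝ) (X : Ω → α) (Z : Ω → γ) (c : γ) :
    ∑ a, prob p (fun ω => (X ω, Z ω)) (a, c) = prob p Z c := by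
  simp only [prob, Prod.ext_iff]
  rw [Finset.sum_comm]
  refine Finset.sum_congr rfl fun ω _ => ?_
  by_cases h : Z ω = c <;> simp [h]

theorem sum_prob_mul [Fintype α] (p : Ω → ℝ) (X : Ω → α) (g : α → ℝ) :
    ∑ a, prob p X a * g a = ∑ ω, p ω * g (X ω) := by
  simp only [prob, Finset.sum_mul, ite_mul, zero_mul]
  rw [Finset.sum_comm]
  simp [eq_comm]

theorem sum_prob [Fintype α] (hsum : ∑ ω, p ω = 1) (X : Ω → α) : ∑ a, prob p X a = 1 := by
  simpa [hsum] using sum_prob_mul p X fun _ => 1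

end Prob

section Entropy

variable {Ω : Type*} [Fintype Ω] {α β γ : Type*}
  [Fintype α] [DecidableEq α] [Fintype β] [DecidableEq β] [Fintype γ] [DecidableEq γ]
  {p : Ω → ℝ}

theorem ent_eq_sum (p : Ω → ℝ) (X : Ω → α) :
    ent p X = -∑ ω, p ω * Real.logb 2 (prob p X (X ω)) := by
  rw [ent, sum_prob_mul p X fun a => Real.logb 2 (prob p X a)]

theorem ent_const (hsum : ∑ ω, p ω = 1) (c : α) : ent p (fun _ => c) = 0 := by
  simp [ent_eq_sum, prob, hsum]

theorem ent_le_of_comp (hp : ∀ ω, 0 ≤ p ω) {W : Ω → α} {V : Ω → β} (f : α → β)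
    (hV : ∀ ω, V ω = f (W ω)) : ent p V ≤ ent p W := by
  rw [ent_eq_sum, ent_eq_sum, neg_le_neg_iff]
  refine Finset.sum_le_sum fun ω _ => ?_
  rcases (hp ω).eq_or_lt with h0 | hpos
  · simp [← h0]
  · refine mul_le_mul_of_nonneg_left (Real.logb_le_logb_of_le one_lt_two
      (hpos.trans_le (le_prob_self hp W ω)) ?_) hpos.le
    rw [hV]
    exact prob_le_prob_of_comp hp f hV (W ω)

theorem ent_eq_of_comp (hp : ∀ ω, 0 ≤ p ω) {W : Ω → α} {V : Ω → β} (f : α → β) (g : β → α)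
    (hV : ∀ ω, V ω = f (W ω)) (hW : ∀ ω, W ω = g (V ω)) : ent p V = ent p W :=
  (ent_le_of_comp hp f hV).antisymm (ent_le_of_comp hp g hW)

theorem cmi_nonneg (hp : ∀ ω, 0 ≤ p ω) (hsum : ∑ ω, p ω = 1)
    (X : Ω → α) (Y : Ω → β) (Z : Ω → γ) : 0 ≤ cmi p X Y Z := by
  set XZ := fun ω => (X ω, Z ω)
  set YZ := fun ω => (Y ω, Z ω)
  set W := fun ω => (X ω, Y ω, Z ω)
  -- The law under which `X` and `Y` are independent given `Z`; Gibbs' inequality compares with it.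
  set F : α × β × γ → ℝ := fun w =>
    prob p XZ (w.1, w.2.2) * prob p YZ (w.2.1, w.2.2) / prob p Z w.2.2
  have hF_nonneg : ∀ w, 0 ≤ F w := fun w =>
    div_nonneg (mul_nonneg (prob_nonneg hp _ _) (prob_nonneg hp _ _)) (prob_nonneg hp _ _)
  have hF_sum : ∑ w, F w = 1 := by
    calc ∑ w, F w
          = ∑ c, (∑ a, prob p XZ (a, c)) * (∑ b, prob p YZ (b, c)) / prob p Z c := by
          simp only [F, Fintype.sum_prod_type, Finset.sum_mul_sum, Finset.sum_div]
          exact (Finset.sum_congr rfl fun a _ => Finset.sum_comm).trans Finset.sum_comm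
      _ = ∑ c, prob p Z c := Finset.sum_congr rfl fun c _ => by
          rw [show ∑ a, prob p XZ (a, c) = prob p Z c from sum_prob_pair_left p X Z c,
            show ∑ b, prob p YZ (b, c) = prob p Z c from sum_prob_pair_left p Y Z c,
            mul_self_div_self]
      _ = 1 := sum_prob hsum Z
  have hratio : ∑ ω, p ω * (F (W ω) / prob p W (W ω)) ≤ 1 := by
    rw [← sum_prob_mul p W fun w => F w / prob p W w, ← hF_sum]
    refine Finset.sum_le_sum fun w _ => ?_
    rcases eq_or_ne (prob p W w) 0 with h | h
    · simp [h, hF_nonneg w]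
    · rw [mul_div_cancel₀ _ h]
  have hpoint : ∀ ω, p ω * (1 - F (W ω) / prob p W (W ω)) / Real.log 2 ≤
      p ω * (Real.logb 2 (prob p W (W ω)) + Real.logb 2 (prob p Z (Z ω))
        - Real.logb 2 (prob p XZ (XZ ω)) - Real.logb 2 (prob p YZ (YZ ω))) := by
    intro ω
    rcases (hp ω).eq_or_lt with h0 | hpos
    · simp [← h0]
    have hr := hpos.trans_le (le_prob_self hp W ω)
    have hs := hpos.trans_le (le_prob_self hp Z ω)
    have hu := hpos.trans_le (le_prob_self hp XZ ω)
    have hv := hpos.trans_le (le_prob_self hp YZ ω)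
    have hFW : F (W ω) = prob p XZ (XZ ω) * prob p YZ (YZ ω) / prob p Z (Z ω) := rfl
    rw [hFW]
    generalize prob p W (W ω) = r at hr ⊢
    generalize prob p Z (Z ω) = s at hs ⊢
    generalize prob p XZ (XZ ω) = u at hu ⊢
    generalize prob p YZ (YZ ω) = v at hv ⊢
    have key := Real.one_sub_inv_le_log_of_pos (show 0 < r * s / (u * v) by positivity)
    rw [Real.log_div (by positivity) (by positivity), Real.log_mul hr.ne' hs.ne',
      Real.log_mul hu.ne' hv.ne'] at key
    have hlogb : Real.logb 2 r + Real.logb 2 s - Real.logb 2 u - Real.logb 2 v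
        = (Real.log r + Real.log s - (Real.log u + Real.log v)) / Real.log 2 := by
      simp only [Real.logb]; ring
    rw [hlogb, mul_div_assoc]
    refine mul_le_mul_of_nonneg_left
      (div_le_div_of_nonneg_right ?_ (Real.log_pos one_lt_two).le) hpos.le
    rwa [inv_div, mul_comm r s, ← div_div] at key
  have hcmi : cmi p X Y Z =
      ∑ ω, p ω * (Real.logb 2 (prob p W (W ω)) + Real.logb 2 (prob p Z (Z ω))
        - Real.logb 2 (prob p XZ (XZ ω)) - Real.logb 2 (prob p YZ (YZ ω))) := by
    simp only [cmi, ent_eq_sum, mul_sub, mul_add, Finset.sum_sub_distrib, Finset.sum_add_distrib]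
    ring
  calc 0 ≤ (1 - ∑ ω, p ω * (F (W ω) / prob p W (W ω))) / Real.log 2 :=
        div_nonneg (sub_nonneg.2 hratio) (Real.log_pos one_lt_two).le
    _ = ∑ ω, p ω * (1 - F (W ω) / prob p W (W ω)) / Real.log 2 := by
        simp only [← Finset.sum_div, mul_sub, mul_one, Finset.sum_sub_distrib, hsum]
    _ ≤ _ := Finset.sum_le_sum fun ω _ => hpoint ω
    _ = cmi p X Y Z := hcmi.symm

theorem condEnt_prod_le (hp : ∀ ω, 0 ≤ p ω) (hsum : ∑ ω, p ω = 1)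
    (X : Ω → α) (Y : Ω → β) (Z : Ω → γ) :
    condEnt p X (fun ω => (Y ω, Z ω)) ≤ condEnt p X Z := by
  have := cmi_nonneg hp hsum X Y Z
  unfold cmi at this
  unfold condEnt
  linarith

theorem condEnt_le_of_comp (hp : ∀ ω, 0 ≤ p ω) (hsum : ∑ ω, p ω = 1) (X : Ω → α)
    {Z : Ω → γ} {W : Ω → β} (f : γ → β) (hW : ∀ ω, W ω = f (Z ω)) :
    condEnt p X Z ≤ condEnt p X W := by
  have hXZW : ent p (fun ω => (X ω, Z ω, W ω)) = ent p (fun ω => (X ω, Z ω)) :=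
    ent_eq_of_comp hp (fun xz => (xz.1, xz.2, f xz.2)) (fun xzw => (xzw.1, xzw.2.1))
      (by simp [hW]) (fun _ => rfl)
  have hZW : ent p (fun ω => (Z ω, W ω)) = ent p Z :=
    ent_eq_of_comp hp (fun z => (z, f z)) Prod.fst (by simp [hW]) (fun _ => rfl)
  have := condEnt_prod_le hp hsum X Z W
  unfold condEnt at *
  linarith

theorem condEnt_le_ent (hp : ∀ ω, 0 ≤ p ω) (hsum : ∑ ω, p ω = 1) (X : Ω → α) (Z : Ω → γ) :
    condEnt p X Z ≤ ent p X :=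
  calc condEnt p X Z ≤ condEnt p X (fun _ => ()) :=
        condEnt_le_of_comp hp hsum X (fun _ => ()) (fun _ => rfl)
    _ = ent p X := by
        rw [condEnt, ent_const hsum, sub_zero]
        exact ent_eq_of_comp hp (fun x => (x, ())) Prod.fst (fun _ => rfl) (fun _ => rfl)

theorem condEnt_le_condEnt_add_condEnt (hp : ∀ ω, 0 ≤ p ω) (X : Ω → α) (Y : Ω → β)
    (Z : Ω → γ) : condEnt p X Z ≤ condEnt p Y Z + condEnt p X (fun ω => (Y ω, Z ω)) := by
  have hdrop := ent_le_of_comp hp (W := fun ω => (X ω, Y ω, Z ω)) (fun xyz => (xyz.1, xyz.2.2))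
    (V := fun ω => (X ω, Z ω)) (fun _ => rfl)
  unfold condEnt
  linarith

theorem condEnt_prod_le_add (hp : ∀ ω, 0 ≤ p ω) (hsum : ∑ ω, p ω = 1)
    (X : Ω → α) (Y : Ω → β) (Z : Ω → γ) :
    condEnt p (fun ω => (X ω, Y ω)) Z ≤ condEnt p X Z + condEnt p Y Z := by
  have hassoc : ent p (fun ω => ((X ω, Y ω), Z ω)) = ent p (fun ω => (X ω, Y ω, Z ω)) :=
    ent_eq_of_comp hp (fun xyz => ((xyz.1, xyz.2.1), xyz.2.2))
      (fun xyz => (xyz.1.1, xyz.1.2, xyz.2)) (fun _ => rfl) (fun _ => rfl)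
  have := cmi_nonneg hp hsum X Y Z
  unfold cmi at this
  unfold condEnt
  linarith

theorem condEnt_eq_of_cmi_eq_zero (hp : ∀ ω, 0 ≤ p ω) {X : Ω → α} {Y : Ω → β} {Z : Ω → γ}
    (h : cmi p Y X Z = 0) : condEnt p X Z = condEnt p X (fun ω => (Y ω, Z ω)) := by
  have hswap : ent p (fun ω => (Y ω, X ω, Z ω)) = ent p (fun ω => (X ω, Y ω, Z ω)) :=
    ent_eq_of_comp hp (fun xyz => (xyz.2.1, xyz.1, xyz.2.2))
      (fun yxz => (yxz.2.1, yxz.1, yxz.2.2)) (fun _ => rfl) (fun _ => rfl)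
  unfold cmi at h
  unfold condEnt
  linarith

end Entropy

theorem stmt8_general {Ω : Type*} [Fintype Ω] {α β γ μ ν ρ : Type*}
    [Fintype α] [DecidableEq α] [Fintype β] [DecidableEq β] [Fintype γ] [DecidableEq γ]
    [Fintype μ] [DecidableEq μ] [Fintype ν] [DecidableEq ν] [Fintype ρ] [DecidableEq ρ]
    (p : Ω → ℝ) (hp : ∀ ω, 0 ≤ p ω) (hsum : ∑ ω, p ω = 1)
    (X : Ω → α) (Y : Ω → β) (Z : Ω → γ)
    (M12 : Ω → μ) (M23 : Ω → ν) (M31 : Ω → ρ)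
    (hcorY : condEnt p Y (fun ω => (M12 ω, M23 ω)) = 0)
    (hcorZ : condEnt p Z (fun ω => (M23 ω, M31 ω)) = 0)
    (hprivA : cmi p (fun ω => (M12 ω, M31 ω)) (fun ω => (Y ω, Z ω)) X = 0) :
    ent p M23 ≥ condEnt p (fun ω => (Y ω, Z ω)) X := by
  set A := fun ω => (M12 ω, M31 ω)
  set YZ := fun ω => (Y ω, Z ω)
  calc condEnt p YZ X = condEnt p YZ (fun ω => (A ω, X ω)) :=
        condEnt_eq_of_cmi_eq_zero hp hprivA
    _ ≤ condEnt p YZ A := condEnt_le_of_comp hp hsum YZ Prod.fst (fun _ => rfl)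
    _ ≤ condEnt p M23 A + condEnt p YZ (fun ω => (M23 ω, A ω)) :=
        condEnt_le_condEnt_add_condEnt hp YZ M23 A
    _ ≤ ent p M23 +
          (condEnt p Y (fun ω => (M23 ω, A ω)) + condEnt p Z (fun ω => (M23 ω, A ω))) :=
        add_le_add (condEnt_le_ent hp hsum M23 A) (condEnt_prod_le_add hp hsum Y Z _)
    _ ≤ ent p M23 +
          (condEnt p Y (fun ω => (M12 ω, M23 ω)) + condEnt p Z (fun ω => (M23 ω, M31 ω))) := by
        gcongr
        · exact condEnt_le_of_comp hp hsum Y (fun m => (m.2.1, m.1)) (fun _ => rfl)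
        · exact condEnt_le_of_comp hp hsum Z (fun m => (m.1, m.2.2)) (fun _ => rfl)
    _ = ent p M23 := by rw [hcorY, hcorZ, add_zero, add_zero]

theorem stmt8 {Ω : Type*} [Fintype Ω] {α β γ μ ν ρ : Type*}
    [Fintype α] [DecidableEq α] [Fintype β] [DecidableEq β] [Fintype γ] [DecidableEq γ]
    [Fintype μ] [DecidableEq μ] [Fintype ν] [DecidableEq ν] [Fintype ρ] [DecidableEq ρ]
    (p : Ω → ℝ) (hp : ∀ ω, 0 ≤ p ω) (hsum : ∑ ω, p ω = 1)
    (X : Ω → α) (Y : Ω → β) (Z : Ω → γ)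
    (M12 : Ω → μ) (M23 : Ω → ν) (M31 : Ω → ρ)
    (hcorX : condEnt p X (fun ω => (M12 ω, M31 ω)) = 0)
    (hcorY : condEnt p Y (fun ω => (M12 ω, M23 ω)) = 0)
    (hcorZ : condEnt p Z (fun ω => (M23 ω, M31 ω)) = 0)
    (hprivA : cmi p (fun ω => (M12 ω, M31 ω)) (fun ω => (Y ω, Z ω)) X = 0) :
    ent p M23 ≥ condEnt p (fun ω => (Y ω, Z ω)) X :=
  stmt8_general p hp hsum X Y Z M12 M23 M31 hcorY hcorZ hprivA
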